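/- Let b_1, …, b_n be a (3/4)-LLL-reduced basis of a lattice L ⊆ ℝ^n. Then ‖b_1‖ ≤ 2^{(n−1)/2} · λ₁(L), where λ₁(L) is the minimum Euclidean norm over nonzero vectors of L. -/

import Mathlib

/-- The Gram–Schmidt orthogonalization of a finite family of vectors in `ℝ^n`. -/
noncomputable def gramSchmidtVecs {n m : ℕ} (b : Fin m → EuclideanSpace ℝ (Fin n)) :
    Fin m → EuclideanSpace ℝ (Fin n) :=
  @InnerProductSpace.gramSchmidt ℝ (EuclideanSpace ℝ (Fin n)) _ _ _ (Fin m) _ _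
    (inferInstance : WellFoundedLT (Fin m)) b

/-- `λ₁(L)`: the minimum norm of a nonzero vector of `L`. -/
noncomputable def lambda1 {n : ℕ} (L : Set (EuclideanSpace ℝ (Fin n))) : ℝ :=
  sInf {r : ℝ | ∃ v ∈ L, v ≠ 0 ∧ ‖v‖ = r}

/-!
Write `b*ᵢ` for the Gram–Schmidt vectors. Size reduction and the Lovász condition with `δ = 3/4`
give `‖b*ᵢ‖² ≤ 2‖b*ᵢ₊₁‖²`, hence `‖b₁‖² = ‖b*₁‖² ≤ 2^(n-1)‖b*ₖ‖²` for every `k`. On the other hand,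
if `v = ∑ zᵢbᵢ ≠ 0` with integer `zᵢ` and `k` is the largest index with `zₖ ≠ 0`, then
`⟪v, b*ₖ⟫ = zₖ‖b*ₖ‖²`, so Cauchy–Schwarz and `|zₖ| ≥ 1` give `‖b*ₖ‖ ≤ ‖v‖`. Together,
`‖b₁‖² ≤ 2^(n-1)‖v‖²` for every nonzero lattice vector `v`.
-/

open InnerProductSpace

lemma gramSchmidtVecs_eq {n m : ℕ} (b : Fin m → EuclideanSpace ℝ (Fin n)) :
    gramSchmidtVecs b = gramSchmidt ℝ b :=
  rfl

lemma norm_le_of_inner_eq_intCast_mul_norm_sq {E : Type*} [NormedAddCommGroup E]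
    [InnerProductSpace ℝ E] {v w : E} {m : ℤ} (hm : m ≠ 0) (h : ⟪v, w⟫_ℝ = m * ‖w‖ ^ 2) :
    ‖w‖ ≤ ‖v‖ := by
  rcases (norm_nonneg w).eq_or_lt with hw | hw
  · rw [← hw]
    exact norm_nonneg v
  have hm_one : (1 : ℝ) ≤ |(m : ℝ)| := by exact_mod_cast Int.one_le_abs hm
  refine le_of_mul_le_mul_right ?_ hw
  calc ‖w‖ * ‖w‖ = ‖w‖ ^ 2 := (sq _).symm
    _ ≤ |(m : ℝ)| * ‖w‖ ^ 2 := le_mul_of_one_le_left (by positivity) hm_one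
    _ = |⟪v, w⟫_ℝ| := by rw [h, abs_mul, abs_of_nonneg (sq_nonneg ‖w‖)]
    _ ≤ ‖v‖ * ‖w‖ := abs_real_inner_le_norm v w

lemma sub_quarter_mul_norm_sq_le_of_lovasz {E : Type*} [NormedAddCommGroup E]
    [InnerProductSpace ℝ E] {x y : E} {μ δ : ℝ} (hxy : ⟪y, x⟫_ℝ = 0) (hμ : |μ| ≤ 1 / 2)
    (hlovasz : δ * ‖x‖ ^ 2 ≤ ‖y + μ • x‖ ^ 2) :
    (δ - 1 / 4) * ‖x‖ ^ 2 ≤ ‖y‖ ^ 2 := by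
  have hpyth : ‖y + μ • x‖ ^ 2 = ‖y‖ ^ 2 + μ ^ 2 * ‖x‖ ^ 2 := by
    rw [norm_add_sq_real, real_inner_smul_right, hxy, norm_smul, mul_pow, Real.norm_eq_abs,
      sq_abs]
    ring
  have hμ_sq : μ ^ 2 ≤ 1 / 4 := by
    rw [← sq_abs]
    nlinarith [abs_nonneg μ]
  nlinarith [sq_nonneg ‖x‖]

section GramSchmidt

variable {E ι : Type*} [NormedAddCommGroup E] [InnerProductSpace ℝ E]
  [LinearOrder ι] [LocallyFiniteOrderBot ι] [WellFoundedLT ι]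

lemma gramSchmidt_eq_self_of_isMin (b : ι → E) {i : ι} (hi : IsMin i) :
    gramSchmidt ℝ b i = b i := by
  rw [gramSchmidt_def, Finset.Iio_eq_empty.mpr hi, Finset.sum_empty, sub_zero]

lemma inner_self_gramSchmidt (b : ι → E) (i : ι) :
    ⟪b i, gramSchmidt ℝ b i⟫_ℝ = ‖gramSchmidt ℝ b i‖ ^ 2 := by
  conv_lhs => rw [gramSchmidt_def' ℝ b i]
  rw [inner_add_left, real_inner_self_eq_norm_sq, sum_inner, Finset.sum_eq_zero, add_zero]
  intro j hj
  rw [Submodule.starProjection_singleton, real_inner_smul_left,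
    gramSchmidt_orthogonal ℝ b (Finset.mem_Iio.mp hj).ne, mul_zero]

lemma inner_sum_smul_gramSchmidt [Fintype ι] (b : ι → E) {z : ι → ℝ} {k : ι}
    (hz : ∀ i, k < i → z i = 0) :
    ⟪∑ i, z i • b i, gramSchmidt ℝ b k⟫_ℝ = z k * ‖gramSchmidt ℝ b k‖ ^ 2 := by
  rw [sum_inner, Finset.sum_eq_single k, real_inner_smul_left, inner_self_gramSchmidt]
  · intro i _ hik
    rcases hik.lt_or_gt with hik | hik
    · rw [real_inner_smul_left, real_inner_comm, gramSchmidt_inv_triangular ℝ b hik, mul_zero]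
    · rw [hz i hik, zero_smul, inner_zero_left]
  · exact fun hk => (hk (Finset.mem_univ k)).elim

lemma exists_norm_gramSchmidt_le_of_mem_span_int [Fintype ι] {b : ι → E} {v : E}
    (hv : v ∈ Submodule.span ℤ (Set.range b)) (hv₀ : v ≠ 0) :
    ∃ k, ‖gramSchmidt ℝ b k‖ ≤ ‖v‖ := by
  classical
  obtain ⟨z, rfl⟩ := (Submodule.mem_span_range_iff_exists_fun ℤ).mp hv
  set S := Finset.univ.filter fun i => z i ≠ 0
  have hS : S.Nonempty := by
    by_contra! hS
    refine hv₀ (Finset.sum_eq_zero fun i _ => ?_)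
    have : z i = 0 := by simpa [S] using Finset.filter_eq_empty_iff.mp hS (Finset.mem_univ i)
    rw [this, zero_smul]
  have hk : z (S.max' hS) ≠ 0 := (Finset.mem_filter.mp (S.max'_mem hS)).2
  refine ⟨S.max' hS, norm_le_of_inner_eq_intCast_mul_norm_sq hk ?_⟩
  simp_rw [← Int.cast_smul_eq_zsmul ℝ]
  refine inner_sum_smul_gramSchmidt b fun i hi => ?_
  by_contra hzi
  exact (S.le_max' i (Finset.mem_filter.mpr ⟨Finset.mem_univ i, mod_cast hzi⟩)).not_gt hi

end GramSchmidt

lemma le_pow_mul_of_le_mul_succ {n : ℕ} (hn : 0 < n) {f : Fin n → ℝ} {c : ℝ} (hc : 0 ≤ c)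
    (h : ∀ i : Fin n, ∀ hi : (i : ℕ) + 1 < n, f i ≤ c * f ⟨i + 1, hi⟩) (k : Fin n) :
    f ⟨0, hn⟩ ≤ c ^ (k : ℕ) * f k := by
  obtain ⟨k, hk⟩ := k
  induction k with
  | zero => rw [pow_zero, one_mul]
  | succ k ih =>
    calc f ⟨0, hn⟩ ≤ c ^ k * f ⟨k, by omega⟩ := ih (by omega)
      _ ≤ c ^ k * (c * f ⟨k + 1, hk⟩) := by gcongr; exact h ⟨k, by omega⟩ hk
      _ = c ^ (k + 1) * f ⟨k + 1, hk⟩ := by ring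

lemma le_rpow_half_mul_of_sq_le {a b c t : ℝ} (hb : 0 ≤ b) (hc : 0 ≤ c)
    (h : a ^ 2 ≤ c ^ t * b ^ 2) : a ≤ c ^ (t / 2) * b := by
  refine abs_le_of_sq_le_sq' ?_ (by positivity) |>.2
  rwa [mul_pow, ← Real.rpow_mul_natCast hc, Nat.cast_ofNat, div_mul_cancel₀ t two_ne_zero]

lemma lambda1_nonneg {n : ℕ} (L : Set (EuclideanSpace ℝ (Fin n))) : 0 ≤ lambda1 L :=
  Real.sInf_nonneg fun _ ⟨_, _, _, hr⟩ => hr ▸ norm_nonneg _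

lemma le_mul_lambda1 {n : ℕ} {L : Set (EuclideanSpace ℝ (Fin n))} {x : EuclideanSpace ℝ (Fin n)}
    (hx : x ∈ L) {c : ℝ} (hc : 0 < c) (h : ∀ v ∈ L, v ≠ 0 → ‖x‖ ≤ c * ‖v‖) :
    ‖x‖ ≤ c * lambda1 L := by
  rcases eq_or_ne x 0 with rfl | hx₀
  · rw [norm_zero]
    exact mul_nonneg hc.le (lambda1_nonneg L)
  rw [← div_le_iff₀' hc]
  refine le_csInf ⟨‖x‖, x, hx, hx₀, rfl⟩ ?_
  rintro _ ⟨v, hv, hv₀, rfl⟩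
  exact (div_le_iff₀' hc).mpr (h v hv hv₀)

theorem lll_first_vector_bound_general (n : ℕ) (hn : 0 < n)
    (b : Fin n → EuclideanSpace ℝ (Fin n))
    (L : Set (EuclideanSpace ℝ (Fin n)))
    (hL : L = (Submodule.span ℤ (Set.range b) : Submodule ℤ (EuclideanSpace ℝ (Fin n))))
    (hsize : ∀ i j : Fin n, j < i →
      |(inner ℝ (b i) (gramSchmidtVecs b j) : ℝ) /
        (inner ℝ (gramSchmidtVecs b j) (gramSchmidtVecs b j) : ℝ)| ≤ 1 / 2)
    (hlovasz : ∀ i : Fin n, ∀ hi : (i : ℕ) + 1 < n,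
      ‖gramSchmidtVecs b ⟨(i : ℕ) + 1, hi⟩ +
        ((inner ℝ (b ⟨(i : ℕ) + 1, hi⟩) (gramSchmidtVecs b i) : ℝ) /
          (inner ℝ (gramSchmidtVecs b i) (gramSchmidtVecs b i) : ℝ)) • gramSchmidtVecs b i‖ ^ 2
        ≥ (3 / 4 : ℝ) * ‖gramSchmidtVecs b i‖ ^ 2) :
    ‖b ⟨0, hn⟩‖ ≤ 2 ^ (((n : ℝ) - 1) / 2) * lambda1 L := by
  rw [gramSchmidtVecs_eq] at hsize hlovasz
  have hdecay : ∀ i : Fin n, ∀ hi : (i : ℕ) + 1 < n,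
      ‖gramSchmidt ℝ b i‖ ^ 2 ≤ 2 * ‖gramSchmidt ℝ b ⟨i + 1, hi⟩‖ ^ 2 := fun i hi => by
    have h := sub_quarter_mul_norm_sq_le_of_lovasz
      (gramSchmidt_orthogonal ℝ b (Fin.ne_of_gt (Nat.lt_succ_self i)))
      (hsize ⟨i + 1, hi⟩ i (Nat.lt_succ_self i)) (hlovasz i hi)
    linarith
  have hb₀ : gramSchmidt ℝ b ⟨0, hn⟩ = b ⟨0, hn⟩ :=
    gramSchmidt_eq_self_of_isMin b fun j _ => Nat.zero_le j
  refine le_mul_lambda1 (hL ▸ Submodule.subset_span ⟨_, rfl⟩) (by positivity) fun v hv hv₀ => ?_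
  obtain ⟨k, hk⟩ := exists_norm_gramSchmidt_le_of_mem_span_int (hL ▸ hv) hv₀
  refine le_rpow_half_mul_of_sq_le (norm_nonneg v) zero_le_two ?_
  calc ‖b ⟨0, hn⟩‖ ^ 2 ≤ 2 ^ (k : ℕ) * ‖gramSchmidt ℝ b k‖ ^ 2 :=
        hb₀ ▸ le_pow_mul_of_le_mul_succ hn zero_le_two hdecay k
    _ ≤ 2 ^ ((n : ℝ) - 1) * ‖v‖ ^ 2 := by
        rw [← Real.rpow_natCast]
        gcongr
        · exact one_le_two
        · have : (k : ℝ) + 1 ≤ n := by exact_mod_cast k.is_lt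
          linarith

/-- If `b₁, …, bₙ` is a `(3/4)`-LLL-reduced basis of a lattice `L`, then
`‖b₁‖ ≤ 2^{(n-1)/2}·λ₁(L)`. -/
theorem lll_first_vector_bound (n : ℕ) (hn : 0 < n)
    (b : Fin n → EuclideanSpace ℝ (Fin n)) (hb : LinearIndependent ℝ b)
    (L : Set (EuclideanSpace ℝ (Fin n)))
    (hL : L = (Submodule.span ℤ (Set.range b) : Submodule ℤ (EuclideanSpace ℝ (Fin n))))
    (hsize : ∀ i j : Fin n, j < i →
      |(inner ℝ (b i) (gramSchmidtVecs b j) : ℝ) /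
        (inner ℝ (gramSchmidtVecs b j) (gramSchmidtVecs b j) : ℝ)| ≤ 1 / 2)
    (hlovasz : ∀ i : Fin n, ∀ hi : (i : ℕ) + 1 < n,
      ‖gramSchmidtVecs b ⟨(i : ℕ) + 1, hi⟩ +
        ((inner ℝ (b ⟨(i : ℕ) + 1, hi⟩) (gramSchmidtVecs b i) : ℝ) /
          (inner ℝ (gramSchmidtVecs b i) (gramSchmidtVecs b i) : ℝ)) • gramSchmidtVecs b i‖ ^ 2
        ≥ (3 / 4 : ℝ) * ‖gramSchmidtVecs b i‖ ^ 2) :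
    ‖b ⟨0, hn⟩‖ ≤ 2 ^ (((n : ℝ) - 1) / 2) * lambda1 L :=
  lll_first_vector_bound_general n hn b L hL hsize hlovasz
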